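/- arXiv:2305.00730 — 4 statements merged into one kernel-verified Lean document; each statement's English description precedes it below -/
import Mathlib

section
/- Let G = (V,E) be a finite simple graph, let f be a triple Roman dominating function of G, and let v be a vertex with f(v) = 1 having a neighbor u with f(u) = 3. Define g by g(v) = 0, g(u) = 4, and g(x) = f(x) for all other vertices x. Then g is a triple Roman dominating function of G with the same weight as f. -/
/-!
Away from `v` and `u` nothing changes, no value moves onto or off `2`, and values that are at
least `2` only grow, so every witness of the domination conditions at an unchanged vertex remains
a witness. The vertex `v` is now dominated by `u`, which at value `4` carries no condition
itself, and the weight is preserved because `0 + 4 = 1 + 3`.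
-/

open Finset

/-- Values in `{0,1,2,3,4}` are modelled as naturals bounded by `4`. -/
def Is3RDF {V : Type*} [Fintype V] (G : SimpleGraph V) [DecidableRel G.Adj]
    (f : V → ℕ) : Prop :=
  (∀ v, f v ≤ 4) ∧
  ∀ v : V,
    (f v = 0 →
      (∃ z, G.Adj v z ∧ f z = 4) ∨
      (∃ u w, u ≠ w ∧ G.Adj v u ∧ G.Adj v w ∧ 2 ≤ f u ∧ f w = 3) ∨
      3 ≤ ((G.neighborFinset v).filter (fun u => f u = 2)).card) ∧
    (f v = 1 →
      (∃ w, G.Adj v w ∧ 3 ≤ f w) ∨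
      2 ≤ ((G.neighborFinset v).filter (fun u => f u = 2)).card) ∧
    (f v = 2 → ∃ w, G.Adj v w ∧ 2 ≤ f w)

noncomputable def gamma3R {V : Type*} [Fintype V] (G : SimpleGraph V)
    [DecidableRel G.Adj] : ℕ :=
  sInf {n | ∃ f : V → ℕ, Is3RDF G f ∧ ∑ v, f v = n}

section

variable {V : Type*} [Fintype V] (G : SimpleGraph V) [DecidableRel G.Adj]

def Is3RDFAt (f : V → ℕ) (v : V) : Prop :=
  (f v = 0 →
    (∃ z, G.Adj v z ∧ f z = 4) ∨
    (∃ u w, u ≠ w ∧ G.Adj v u ∧ G.Adj v w ∧ 2 ≤ f u ∧ f w = 3) ∨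
    3 ≤ ((G.neighborFinset v).filter (fun u => f u = 2)).card) ∧
  (f v = 1 →
    (∃ w, G.Adj v w ∧ 3 ≤ f w) ∨
    2 ≤ ((G.neighborFinset v).filter (fun u => f u = 2)).card) ∧
  (f v = 2 → ∃ w, G.Adj v w ∧ 2 ≤ f w)

variable {G}

theorem is3RDF_iff {f : V → ℕ} : Is3RDF G f ↔ (∀ v, f v ≤ 4) ∧ ∀ v, Is3RDFAt G f v :=
  Iff.rfl

theorem is3RDFAt_of_three_le {f : V → ℕ} {v : V} (hv : 3 ≤ f v) : Is3RDFAt G f v :=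
  ⟨fun h => by omega, fun h => by omega, fun h => by omega⟩

theorem is3RDFAt_of_adj_of_eq_four {f : V → ℕ} {v u : V} (hvu : G.Adj v u) (hu : f u = 4) :
    Is3RDFAt G f v :=
  ⟨fun _ => .inl ⟨u, hvu, hu⟩, fun _ => .inl ⟨u, hvu, by omega⟩,
    fun _ => ⟨u, hvu, by omega⟩⟩

theorem Is3RDF.is3RDFAt_of_le {f g : V → ℕ} (hf : Is3RDF G f) (hg : ∀ y, g y ≤ 4)
    (hle : ∀ y, 2 ≤ f y → f y ≤ g y) (htwo : ∀ y, g y = 2 ↔ f y = 2) {x : V}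
    (hx : g x = f x) : Is3RDFAt G g x := by
  obtain ⟨hzero, hone, htwo'⟩ := hf.2 x
  have hcard : (G.neighborFinset x).filter (fun y => g y = 2)
      = (G.neighborFinset x).filter (fun y => f y = 2) :=
    filter_congr fun y _ => htwo y
  rw [Is3RDFAt, hx, hcard]
  refine ⟨fun h => ?_, fun h => ?_, fun h => ?_⟩
  · rcases hzero h with ⟨z, hxz, hz⟩ | ⟨a, w, haw, hxa, hxw, ha, hw⟩ | hthree
    · exact .inl ⟨z, hxz, by have := hle z (by omega); have := hg z; omega⟩
    · -- a neighbour raised from `3` to `4` dominates on its own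
      rcases (show g w = 3 ∨ g w = 4 by have := hle w (by omega); have := hg w; omega)
        with hw' | hw'
      · exact .inr (.inl ⟨a, w, haw, hxa, hxw, ha.trans (hle a ha), hw'⟩)
      · exact .inl ⟨w, hxw, hw'⟩
    · exact .inr (.inr hthree)
  · rcases hone h with ⟨w, hxw, hw⟩ | htwos
    · exact .inl ⟨w, hxw, hw.trans (hle w (by omega))⟩
    · exact .inr htwos
  · obtain ⟨w, hxw, hw⟩ := htwo' h
    exact ⟨w, hxw, hw.trans (hle w hw)⟩

end

theorem Fintype.sum_update_add_apply {ι M : Type*} [Fintype ι] [DecidableEq ι]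
    [AddCommMonoid M] (f : ι → M) (i : ι) (b : M) :
    ∑ x, Function.update f i b x + f i = ∑ x, f x + b := by
  rw [sum_update_of_mem (mem_univ i), Fintype.sum_eq_sum_compl_add i f,
    compl_eq_univ_sdiff]
  abel

/-- If `f` is a 3RDF, `f v = 1`, and `v` has a neighbor `u` with
`f u = 3`, then `g` with `g v = 0`, `g u = 4`, and `g = f` elsewhere is a 3RDF of the
same weight. -/
theorem swap_one_three_to_zero_four_is_3RDF {V : Type*} [Fintype V] [DecidableEq V]
    (G : SimpleGraph V) [DecidableRel G.Adj] (f : V → ℕ) (hf : Is3RDF G f)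
    (v u : V) (hvu : G.Adj v u) (hv : f v = 1) (hu : f u = 3) :
    Is3RDF G (Function.update (Function.update f v 0) u 4) ∧
      ∑ x, Function.update (Function.update f v 0) u 4 x = ∑ x, f x := by
  have huv : u ≠ v := hvu.ne'
  set g := Function.update (Function.update f v 0) u 4 with hg_def
  have hgu : g u = 4 := Function.update_self ..
  have hgv : g v = 0 := by simp [g, huv.symm]
  have hg : ∀ y, y ≠ u → y ≠ v → g y = f y := fun y hyu hyv => by simp [g, hyu, hyv]
  have hchange : ∀ y, g y = f y ∨ (f y = 3 ∧ g y = 4) ∨ (f y = 1 ∧ g y = 0) := fun y => by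
    by_cases hyu : y = u; · subst hyu; omega
    by_cases hyv : y = v; · subst hyv; omega
    exact .inl (hg y hyu hyv)
  have hbound : ∀ y, g y ≤ 4 := fun y => by
    have := hf.1 y
    rcases hchange y with h | h | h <;> omega
  refine ⟨is3RDF_iff.2 ⟨hbound, fun x => ?_⟩, ?_⟩
  · by_cases hxu : x = u
    · exact hxu ▸ is3RDFAt_of_three_le (by omega)
    by_cases hxv : x = v
    · exact hxv ▸ is3RDFAt_of_adj_of_eq_four hvu hgu
    exact hf.is3RDFAt_of_le hbound (fun y _ => by rcases hchange y with h | h | h <;> omega)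
      (fun y => by rcases hchange y with h | h | h <;> omega) (hg x hxu hxv)
  · have h₁ := Fintype.sum_update_add_apply (Function.update f v 0) u 4
    have h₂ := Fintype.sum_update_add_apply f v 0
    rw [Function.update_of_ne huv, ← hg_def] at h₁
    omega
end

section
/- Let G = (V,E) be a finite simple graph and let f be a quadruple Roman dominating function of G of minimum weight (i.e., weight equal to the quadruple Roman domination number γ_4R(G)). Then there do not exist adjacent vertices v and u of G with f(v) = 1 and f(u) = 5. -/
open Finset

/-- A quadruple Roman dominating function on a finite simple graph `G`:
`f : V → {0,1,2,3,4,5}` such that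
* if `f v = 0` then `v` has a neighbor with value `5`, or two distinct neighbors `u, w`
  with `f u = 4` and `f w ≥ 2`, or at least two neighbors with value `≥ 3`, or at least
  four neighbors with value `2`, or two neighbors with value `2` and one with value `3`;
* if `f v = 1` then `v` has a neighbor with value `≥ 4`, or two distinct neighbors `u, w`
  with `f u = 3` and `f w ≥ 2`, or at least three neighbors with value `2`;
* if `f v = 2` then `v` has a neighbor with value `≥ 3` or at least two neighbors with
  value `2`;
* if `f v = 3` then `v` has a neighbor with value `≥ 2`. -/
def Is4RDF {V : Type*} [Fintype V] (G : SimpleGraph V) [DecidableRel G.Adj]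
    (f : V → ℕ) : Prop :=
  (∀ v, f v ≤ 5) ∧
  ∀ v : V,
    (f v = 0 →
      (∃ u, G.Adj v u ∧ f u = 5) ∨
      (∃ u w, u ≠ w ∧ G.Adj v u ∧ G.Adj v w ∧ f u = 4 ∧ 2 ≤ f w) ∨
      2 ≤ ((G.neighborFinset v).filter (fun u => 3 ≤ f u)).card ∨
      4 ≤ ((G.neighborFinset v).filter (fun u => f u = 2)).card ∨
      (2 ≤ ((G.neighborFinset v).filter (fun u => f u = 2)).card ∧
        1 ≤ ((G.neighborFinset v).filter (fun u => f u = 3)).card)) ∧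
    (f v = 1 →
      (∃ u, G.Adj v u ∧ 4 ≤ f u) ∨
      (∃ u w, u ≠ w ∧ G.Adj v u ∧ G.Adj v w ∧ f u = 3 ∧ 2 ≤ f w) ∨
      3 ≤ ((G.neighborFinset v).filter (fun u => f u = 2)).card) ∧
    (f v = 2 →
      (∃ u, G.Adj v u ∧ 3 ≤ f u) ∨
      2 ≤ ((G.neighborFinset v).filter (fun u => f u = 2)).card) ∧
    (f v = 3 → ∃ u, G.Adj v u ∧ 2 ≤ f u)

/-- The quadruple Roman domination number: the minimum weight `∑ v, f v` over all
quadruple Roman dominating functions of `G`. -/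
noncomputable def gamma4R {V : Type*} [Fintype V] (G : SimpleGraph V)
    [DecidableRel G.Adj] : ℕ :=
  sInf {n | ∃ f : V → ℕ, Is4RDF G f ∧ ∑ v, f v = n}

/-!
Lowering the value of a vertex `v` with `f v = 1` to `0` keeps `f` a quadruple Roman
dominating function as soon as `v` has a neighbour of value `5`: the neighbour conditions of
all other vertices only look at values `≥ 2`, which are unchanged, and the neighbour of value
`5` dominates `v` on its own. The new function is lighter by one, contradicting minimality.
-/

section

variable {V : Type*} [Fintype V] {G : SimpleGraph V} [DecidableRel G.Adj]

theorem gamma4R_le_sum {g : V → ℕ} (hg : Is4RDF G g) : gamma4R G ≤ ∑ v, g v :=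
  Nat.sInf_le ⟨g, hg, rfl⟩

theorem Is4RDF.of_ge_two_iff {f g : V → ℕ} (hf : Is4RDF G f)
    (hge : ∀ x c, 2 ≤ c → (c ≤ g x ↔ c ≤ f x))
    (hchanged : ∀ w, g w ≠ f w → ∃ u, G.Adj w u ∧ g u = 5) : Is4RDF G g := by
  have heq : ∀ x c, 2 ≤ c → (g x = c ↔ f x = c) := fun x c hc => by
    have := hge x c hc
    have := hge x (c + 1) (by omega)
    omega
  refine ⟨fun x => ?_, fun w => ?_⟩
  · have := hge x 6 (by norm_num)
    have := hf.1 x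
    omega
  rcases eq_or_ne (g w) (f w) with hw | hw
  · have hfw := hf.2 w
    simp only [hw, hge _ _ (by norm_num : 2 ≤ 3), hge _ _ (by norm_num : 2 ≤ 4),
      hge _ _ (le_refl 2), heq _ _ (by norm_num : 2 ≤ 5), heq _ _ (by norm_num : 2 ≤ 4),
      heq _ _ (by norm_num : 2 ≤ 3), heq _ _ (le_refl 2)]
    exact hfw
  · obtain ⟨u, hadj, hu⟩ := hchanged w hw
    have hlow : g w ≤ 1 := by
      by_contra! h
      exact hw ((heq w (g w) h).1 rfl).symm
    refine ⟨fun _ => Or.inl ⟨u, hadj, hu⟩, fun _ => Or.inl ⟨u, hadj, by omega⟩,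
      fun _ => by omega, fun _ => by omega⟩

theorem Is4RDF.update_zero_of_adj_five [DecidableEq V] {f : V → ℕ} (hf : Is4RDF G f) {v u : V}
    (hv : f v ≤ 1) (hadj : G.Adj v u) (hu : f u = 5) : Is4RDF G (Function.update f v 0) := by
  refine hf.of_ge_two_iff (fun x c hc => ?_) (fun w hw => ?_)
  · rcases eq_or_ne x v with rfl | hx
    · simp only [Function.update_self]
      omega
    · rw [Function.update_of_ne hx]
  · have hwv : w = v := by
      by_contra h
      exact hw (Function.update_of_ne h _ _)
    subst hwv
    exact ⟨u, hadj, by rw [Function.update_of_ne hadj.ne.symm, hu]⟩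

theorem sum_update_zero_add {M : Type*} [AddCommMonoid M] [DecidableEq V] (f : V → M) (v : V) :
    ∑ x, Function.update f v 0 x + f v = ∑ x, f x := by
  rw [Finset.sum_update_of_mem (Finset.mem_univ v), zero_add, Finset.sdiff_singleton_eq_erase,
    Finset.sum_erase_add _ _ (Finset.mem_univ v)]

end

/-- If `f` is a quadruple Roman dominating function of minimum weight
`γ_4R(G)`, then no two adjacent vertices `v, u` satisfy `f v = 1` and `f u = 5`. -/
theorem no_adjacent_one_five_in_min_4RDF {V : Type*} [Fintype V]
    (G : SimpleGraph V) [DecidableRel G.Adj] (f : V → ℕ)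
    (hf : Is4RDF G f) (hmin : ∑ v, f v = gamma4R G) :
    ¬ ∃ v u : V, G.Adj v u ∧ f v = 1 ∧ f u = 5 := by
  rintro ⟨v, u, hadj, hv, hu⟩
  classical
  have hle := gamma4R_le_sum (hf.update_zero_of_adj_five hv.le hadj hu)
  have hsum := sum_update_zero_add f v
  omega
end

section
/- Let G = (V,E) be a finite simple graph admitting a quadruple Roman dominating function. Then there exists a quadruple Roman dominating function f of G of minimum weight γ_4R(G) such that f(v) ≠ 1 for every vertex v; equivalently, the minimum weight over all quadruple Roman dominating functions taking values in {0,2,3,4,5} equals γ_4R(G). -/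
/-!
Write `c j` for the number of neighbours of `v` with label at least `j`. Since labels are at
most 5, each clause of a 4RDF is a linear condition on `c 2 ≥ c 3 ≥ c 4 ≥ c 5`, monotone in
the counts and antitone in the label of `v`. A vertex `v` labelled 1 may therefore hand its unit
to a neighbour `u` of maximum label (capped at 5): `v` becomes 0 and is defended, because every
threshold reached by some neighbour is now exceeded by `u`, while every other vertex keeps its
label or gains one and sees no label `≥ 2` decrease. The weight does not grow and the number of
1s drops, so starting from a 4RDF of weight `γ_4R` we reach one avoiding 1 of the same weight.
-/

open Finset

/-- The 4RDF condition at a vertex labelled `k` having `c j` neighbours labelled at least `j`. -/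
def Defended (c : ℕ → ℕ) (k : ℕ) : Prop :=
  (k = 0 → 0 < c 5 ∨ (0 < c 4 ∧ 1 < c 2) ∨ 1 < c 3 ∨ (0 < c 3 ∧ 2 < c 2) ∨ 3 < c 2) ∧
  (k = 1 → 0 < c 4 ∨ (0 < c 3 ∧ 1 < c 2) ∨ 2 < c 2) ∧
  (k = 2 → 0 < c 3 ∨ 1 < c 2) ∧
  (k = 3 → 0 < c 2)

namespace Defended

variable {c c' : ℕ → ℕ}

theorem mono {k k' : ℕ} (hc : Antitone c) (hcc' : ∀ j, 2 ≤ j → c j ≤ c' j) (hk : k ≤ k')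
    (h : Defended c k) : Defended c' k' := by
  have := hc (show 4 ≤ 5 by omega); have := hc (show 3 ≤ 4 by omega)
  have := hc (show 2 ≤ 3 by omega)
  have := hcc' 2; have := hcc' 3; have := hcc' 4; have := hcc' 5
  unfold Defended at h ⊢
  omega

theorem zero_of_one (h : Defended c 1) (hcc' : ∀ j, 2 ≤ j → c j ≤ c' j)
    (hbump : ∀ j, 2 ≤ j → j ≤ 4 → 0 < c j → 0 < c' (j + 1)) : Defended c' 0 := by
  have := hcc' 2; have := hcc' 3
  have : 0 < c 2 → 0 < c' 3 := hbump 2 le_rfl (by norm_num)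
  have : 0 < c 3 → 0 < c' 4 := hbump 3 (by norm_num) (by norm_num)
  have : 0 < c 4 → 0 < c' 5 := hbump 4 (by norm_num) le_rfl
  unfold Defended at h ⊢
  omega

end Defended

section Counts

variable {V : Type*} [Fintype V] (G : SimpleGraph V) [DecidableRel G.Adj] (f : V → ℕ) (v : V)

def nbrCount (k : ℕ) : ℕ := ((G.neighborFinset v).filter (fun u => k ≤ f u)).card

theorem nbrCount_antitone : Antitone (nbrCount G f v) :=
  fun _ _ hjk => card_le_card <| monotone_filter_right _ fun _ _ h => hjk.trans h

variable {f} in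
theorem nbrCount_mono {g : V → ℕ} {k : ℕ} (hfg : ∀ u, k ≤ f u → k ≤ g u) :
    nbrCount G f v k ≤ nbrCount G g v k :=
  card_le_card <| monotone_filter_right _ fun u _ => hfg u

theorem card_neighborFinset_filter_pos_iff (p : V → Prop) [DecidablePred p] :
    0 < ((G.neighborFinset v).filter p).card ↔ ∃ u, G.Adj v u ∧ p u := by
  simp [card_pos, filter_nonempty_iff]

theorem nbrCount_pos_iff (k : ℕ) : 0 < nbrCount G f v k ↔ ∃ u, G.Adj v u ∧ k ≤ f u :=
  card_neighborFinset_filter_pos_iff G v _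

theorem card_neighborFinset_filter_eq (k : ℕ) :
    ((G.neighborFinset v).filter (fun u => f u = k)).card =
      nbrCount G f v k - nbrCount G f v (k + 1) := by
  classical
  have hsplit : (G.neighborFinset v).filter (fun u => k ≤ f u) =
      (G.neighborFinset v).filter (fun u => f u = k) ∪
        (G.neighborFinset v).filter (fun u => k + 1 ≤ f u) := by
    ext u
    simp only [mem_filter, mem_union, ← and_or_left]
    exact and_congr_right fun _ => by omega
  rw [nbrCount, nbrCount, hsplit, card_union_of_disjoint (disjoint_filter.2 fun _ _ _ => by omega)]
  omega

theorem exists_adj_pair_iff {p q : V → Prop} [DecidablePred q] (hpq : ∀ u, p u → q u) :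
    (∃ u w, u ≠ w ∧ G.Adj v u ∧ G.Adj v w ∧ p u ∧ q w) ↔
      (∃ u, G.Adj v u ∧ p u) ∧ 1 < ((G.neighborFinset v).filter q).card := by
  constructor
  · rintro ⟨u, w, huw, hu, hw, hpu, hqw⟩
    exact ⟨⟨u, hu, hpu⟩, one_lt_card.2 ⟨u, by simp [hu, hpq u hpu], w, by simp [hw, hqw], huw⟩⟩
  · rintro ⟨⟨u, hu, hpu⟩, hcard⟩
    obtain ⟨w, hw, hwu⟩ := exists_mem_ne hcard u
    simp only [mem_filter, SimpleGraph.mem_neighborFinset] at hw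
    exact ⟨u, w, hwu.symm, hu, hw.1, hpu, hw.2⟩

theorem is4RDF_iff_defended :
    Is4RDF G f ↔ (∀ v, f v ≤ 5) ∧ ∀ v, Defended (nbrCount G f v) (f v) := by
  refine and_congr_right fun hf => forall_congr' fun v => ?_
  have h5 : (∃ u, G.Adj v u ∧ f u = 5) ↔ 0 < nbrCount G f v 5 := by
    rw [nbrCount_pos_iff]
    exact exists_congr fun u => and_congr_right fun _ => ⟨ge_of_eq, fun h => by have := hf u; omega⟩
  have hpair (j : ℕ) (hj : 2 ≤ j) := exists_adj_pair_iff G v (p := fun u => f u = j)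
    (q := fun u => 2 ≤ f u) (fun u hu => hu ▸ hj)
  rw [h5, hpair 4 (by norm_num), hpair 3 (by norm_num)]
  simp only [← card_neighborFinset_filter_pos_iff]
  simp only [← nbrCount.eq_1, card_neighborFinset_filter_eq, Nat.reduceAdd]
  have hanti := nbrCount_antitone G f v
  have := hanti (show 4 ≤ 5 by norm_num); have := hanti (show 3 ≤ 4 by norm_num)
  have := hanti (show 2 ≤ 3 by norm_num)
  unfold Defended
  omega

end Counts

section MoveUnit

variable {V : Type*} [DecidableEq V]

def moveUnit (f : V → ℕ) (v u : V) : V → ℕ :=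
  Function.update (Function.update f u (min (f u + 1) 5)) v 0

variable {f : V → ℕ} {u v : V}

theorem moveUnit_self : moveUnit f v u v = 0 := Function.update_self ..

theorem moveUnit_target (huv : u ≠ v) : moveUnit f v u u = min (f u + 1) 5 := by
  simp [moveUnit, huv]

theorem moveUnit_of_ne (x : V) (hxv : x ≠ v) (hxu : x ≠ u) : moveUnit f v u x = f x := by
  simp [moveUnit, hxv, hxu]

theorem le_moveUnit (hu : f u ≤ 5) (huv : u ≠ v) (x : V) (hxv : x ≠ v) :
    f x ≤ moveUnit f v u x := by
  by_cases hxu : x = u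
  · subst hxu; rw [moveUnit_target huv]; omega
  · rw [moveUnit_of_ne x hxv hxu]

theorem moveUnit_le_five (hf : ∀ x, f x ≤ 5) (x : V) : moveUnit f v u x ≤ 5 := by
  have := hf x
  simp only [moveUnit, Function.update_apply]
  split_ifs <;> omega

theorem sum_update_add [Fintype V] (g : V → ℕ) (i : V) (b : ℕ) :
    ∑ x, Function.update g i b x + g i = ∑ x, g x + b := by
  rw [sum_update_of_mem (mem_univ i), sum_eq_add_sum_sdiff_singleton_of_mem (mem_univ i) g]
  ring

theorem sum_moveUnit_le [Fintype V] (hv : f v = 1) (huv : u ≠ v) :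
    ∑ x, moveUnit f v u x ≤ ∑ x, f x := by
  have h₁ := sum_update_add (Function.update f u (min (f u + 1) 5)) v 0
  have h₂ := sum_update_add f u (min (f u + 1) 5)
  rw [Function.update_of_ne huv.symm, hv] at h₁
  unfold moveUnit
  omega

theorem card_moveUnit_eq_one_lt [Fintype V] (hv : f v = 1) (hu : f u ≠ 0) (huv : u ≠ v) :
    (univ.filter fun x => moveUnit f v u x = 1).card < (univ.filter fun x => f x = 1).card := by
  refine card_lt_card ⟨fun x hx => ?_, fun hsub => ?_⟩
  · simp only [mem_filter, mem_univ, true_and] at hx ⊢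
    have hxv : x ≠ v := by rintro rfl; simp [moveUnit_self] at hx
    have hxu : x ≠ u := by rintro rfl; rw [moveUnit_target huv] at hx; omega
    rwa [moveUnit_of_ne x hxv hxu] at hx
  · have := hsub (mem_filter.2 ⟨mem_univ v, hv⟩)
    simp [moveUnit_self] at this

end MoveUnit

section Reduction

variable {V : Type*} [Fintype V] [DecidableEq V] {G : SimpleGraph V} [DecidableRel G.Adj]
  {f : V → ℕ} {u v : V}

theorem is4RDF_moveUnit (hf : Is4RDF G f) (hv : f v = 1) (hadj : G.Adj v u)
    (hmax : ∀ w, G.Adj v w → f w ≤ f u) : Is4RDF G (moveUnit f v u) := by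
  rw [is4RDF_iff_defended] at hf ⊢
  obtain ⟨hbound, hdef⟩ := hf
  have huv : u ≠ v := hadj.ne'
  have hle := le_moveUnit (hbound u) huv
  have hcount (x : V) (j : ℕ) (hj : 2 ≤ j) : nbrCount G f x j ≤ nbrCount G (moveUnit f v u) x j :=
    nbrCount_mono G x fun w hw => hw.trans (hle w (by rintro rfl; omega))
  refine ⟨moveUnit_le_five hbound, fun x => ?_⟩
  by_cases hxv : x = v
  · subst hxv
    rw [moveUnit_self]
    refine (hv ▸ hdef x).zero_of_one (hcount x) fun j _ hj4 hpos => ?_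
    obtain ⟨w, hw, hjw⟩ := (nbrCount_pos_iff G f x j).1 hpos
    have : j ≤ f u := hjw.trans (hmax w hw)
    exact (nbrCount_pos_iff G _ x _).2 ⟨u, hadj, by rw [moveUnit_target huv]; omega⟩
  · exact (hdef x).mono (nbrCount_antitone G f x) (hcount x) (hle x hxv)

theorem Is4RDF.exists_fewer_ones (hf : Is4RDF G f) (hv : f v = 1) :
    ∃ g, Is4RDF G g ∧ ∑ x, g x ≤ ∑ x, f x ∧
      (univ.filter fun x => g x = 1).card < (univ.filter fun x => f x = 1).card := by
  have hdef := ((is4RDF_iff_defended G f).1 hf).2 v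
  have h2 : 0 < nbrCount G f v 2 := by
    have := nbrCount_antitone G f v (show 2 ≤ 4 by norm_num)
    have := nbrCount_antitone G f v (show 2 ≤ 3 by norm_num)
    unfold Defended at hdef; omega
  obtain ⟨w, hw, h2w⟩ := (nbrCount_pos_iff G f v 2).1 h2
  obtain ⟨u, hu, hmax⟩ := exists_max_image (G.neighborFinset v) f ⟨w, by simpa using hw⟩
  rw [SimpleGraph.mem_neighborFinset] at hu
  have hmax' (x : V) (hx : G.Adj v x) : f x ≤ f u := hmax x (by simpa using hx)
  have hu0 : f u ≠ 0 := by have := hmax' w hw; omega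
  exact ⟨moveUnit f v u, is4RDF_moveUnit hf hv hu hmax', sum_moveUnit_le hv hu.ne',
    card_moveUnit_eq_one_lt hv hu0 hu.ne'⟩

theorem Is4RDF.exists_avoiding_one (hf : Is4RDF G f) :
    ∃ g, Is4RDF G g ∧ (∀ x, g x ≠ 1) ∧ ∑ x, g x ≤ ∑ x, f x := by
  induction hn : (univ.filter fun x => f x = 1).card using Nat.strong_induction_on generalizing f
    with | _ n ih
  by_cases hone : ∃ v, f v = 1
  · obtain ⟨v, hv⟩ := hone
    obtain ⟨g, hg, hgf, hcard⟩ := hf.exists_fewer_ones hv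
    obtain ⟨g', hg', hg'1, hg'g⟩ := ih _ (hn ▸ hcard) hg rfl
    exact ⟨g', hg', hg'1, hg'g.trans hgf⟩
  · exact ⟨f, hf, fun x hx => hone ⟨x, hx⟩, le_rfl⟩

end Reduction

/-- If `G` admits a 4RDF, then there is a 4RDF of minimum weight
`γ_4R(G)` never taking the value `1`. -/
theorem exists_min_4RDF_avoiding_one {V : Type*} [Fintype V]
    (G : SimpleGraph V) [DecidableRel G.Adj]
    (h : ∃ g : V → ℕ, Is4RDF G g) :
    ∃ f : V → ℕ, Is4RDF G f ∧ (∀ v, f v ≠ 1) ∧ ∑ v, f v = gamma4R G := by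
  classical
  obtain ⟨g, hg⟩ := h
  obtain ⟨f, hf, hf_sum⟩ : gamma4R G ∈ {n | ∃ f : V → ℕ, Is4RDF G f ∧ ∑ v, f v = n} :=
    Nat.sInf_mem ⟨_, g, hg, rfl⟩
  obtain ⟨f', hf', hf'1, hf'f⟩ := hf.exists_avoiding_one
  exact ⟨f', hf', hf'1, le_antisymm (hf_sum ▸ hf'f) (Nat.sInf_le ⟨f', hf', rfl⟩)⟩
end

section
/- Let G = (V,E) be a finite simple graph, let f be a quadruple Roman dominating function of G, and let v be a vertex with f(v) = 1 having distinct neighbors u and w with f(u) = 3 and f(w) = 2. Define g by g(v) = 0, g(w) = 3, and g(x) = f(x) for all other vertices x (so g(u) = 3). Then g is a quadruple Roman dominating function of G with the same weight as f. -/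
open Finset

/-!
Values 0 and 1 are invisible to the neighbours of a vertex in every 4RDF condition, so lowering
`f v` from 1 to 0 only affects the condition at `v` itself, which then holds because of the two
neighbours `u` and `w` of value 3. Raising `f w` from 2 to 3 costs a vertex `x` adjacent to `w`
one neighbour of value 2 but gives it a neighbour of value 3, which compensates in every clause
counting neighbours of value 2. The vertex `w` keeps a neighbour of value at least 2, and the
weight is unchanged since `1 + 2 = 0 + 3`.
-/

theorem sum_update_add_s9 {ι M : Type*} [DecidableEq ι] [AddCommMonoid M] {s : Finset ι} {i : ι}
    (hi : i ∈ s) (f : ι → M) (b : M) :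
    ∑ x ∈ s, Function.update f i b x + f i = ∑ x ∈ s, f x + b := by
  rw [sum_update_of_mem hi, sum_eq_add_sum_sdiff_singleton_of_mem hi f, add_comm, add_comm b,
    add_assoc]

theorem card_filter_update_add {ι α : Type*} [DecidableEq ι] {s : Finset ι} {i : ι}
    (hi : i ∈ s) (f : ι → α) (b : α) (P : α → Prop) [DecidablePred P] :
    #(s.filter fun x => P (Function.update f i b x)) + (if P (f i) then 1 else 0) =
      #(s.filter fun x => P (f x)) + (if P b then 1 else 0) := by
  have hind : (fun x => if P (Function.update f i b x) then 1 else 0) =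
      Function.update (fun x => if P (f x) then 1 else 0) i (if P b then 1 else 0) := by
    funext x
    exact Function.apply_update (fun _ a => if P a then 1 else 0) f i b x
  simp only [card_filter, hind]
  exact sum_update_add_s9 hi _ _

def Is4RDFAt {V : Type*} [Fintype V] (G : SimpleGraph V) [DecidableRel G.Adj]
    (f : V → ℕ) (v : V) : Prop :=
  (f v = 0 →
    (∃ u, G.Adj v u ∧ f u = 5) ∨
    (∃ u w, u ≠ w ∧ G.Adj v u ∧ G.Adj v w ∧ f u = 4 ∧ 2 ≤ f w) ∨
    2 ≤ ((G.neighborFinset v).filter (fun u => 3 ≤ f u)).card ∨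
    4 ≤ ((G.neighborFinset v).filter (fun u => f u = 2)).card ∨
    (2 ≤ ((G.neighborFinset v).filter (fun u => f u = 2)).card ∧
      1 ≤ ((G.neighborFinset v).filter (fun u => f u = 3)).card)) ∧
  (f v = 1 →
    (∃ u, G.Adj v u ∧ 4 ≤ f u) ∨
    (∃ u w, u ≠ w ∧ G.Adj v u ∧ G.Adj v w ∧ f u = 3 ∧ 2 ≤ f w) ∨
    3 ≤ ((G.neighborFinset v).filter (fun u => f u = 2)).card) ∧
  (f v = 2 →
    (∃ u, G.Adj v u ∧ 3 ≤ f u) ∨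
    2 ≤ ((G.neighborFinset v).filter (fun u => f u = 2)).card) ∧
  (f v = 3 → ∃ u, G.Adj v u ∧ 2 ≤ f u)

theorem is4RDF_iff {V : Type*} [Fintype V] {G : SimpleGraph V} [DecidableRel G.Adj]
    {f : V → ℕ} : Is4RDF G f ↔ (∀ v, f v ≤ 5) ∧ ∀ v, Is4RDFAt G f v :=
  Iff.rfl

namespace Is4RDFAt

variable {V : Type*} [Fintype V] {G : SimpleGraph V} [DecidableRel G.Adj] {f g : V → ℕ}
  {x y : V}

theorem of_forall_adj (h : Is4RDFAt G f x) (hx : g x = f x)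
    (hadj : ∀ y, G.Adj x y → f y = g y ∨ f y ≤ 1 ∧ g y ≤ 1) : Is4RDFAt G g x := by
  have filter_eq : ∀ {P : ℕ → Prop} [DecidablePred P], (∀ n, P n → 2 ≤ n) →
      (G.neighborFinset x).filter (fun y => P (f y)) =
        (G.neighborFinset x).filter (fun y => P (g y)) := by
    intro P _ hP
    refine filter_congr fun y hy => ?_
    rcases hadj y ((G.mem_neighborFinset x y).1 hy) with e | ⟨hf, hg⟩
    · rw [e]
    · exact ⟨fun p => absurd (hP _ p) (by omega), fun p => absurd (hP _ p) (by omega)⟩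
  unfold Is4RDFAt at h ⊢
  rw [hx, ← filter_eq (P := (3 ≤ ·)) (fun _ _ => by omega),
    ← filter_eq (P := (· = 2)) (fun _ _ => by omega),
    ← filter_eq (P := (· = 3)) (fun _ _ => by omega)]
  grind

theorem update_of_le_one [DecidableEq V] (h : Is4RDFAt G f x) (hxy : x ≠ y) (hy : f y ≤ 1)
    {b : ℕ} (hb : b ≤ 1) : Is4RDFAt G (Function.update f y b) x := by
  refine h.of_forall_adj (Function.update_of_ne hxy _ _) fun z _ => ?_
  by_cases hzy : z = y
  · subst hzy
    exact Or.inr ⟨hy, by rwa [Function.update_self]⟩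
  · exact Or.inl (Function.update_of_ne hzy _ _).symm

theorem update_two_to_three [DecidableEq V] (h : Is4RDFAt G f x) (hxy : x ≠ y) (hy : f y = 2) :
    Is4RDFAt G (Function.update f y 3) x := by
  by_cases hadj : G.Adj x y
  swap
  · refine h.of_forall_adj (Function.update_of_ne hxy _ _) fun z hz => Or.inl ?_
    exact (Function.update_of_ne (fun hzy : z = y => hadj (hzy ▸ hz)) _ _).symm
  have hmem : y ∈ G.neighborFinset x := (G.mem_neighborFinset x y).2 hadj
  have card_ge_three := card_filter_update_add hmem f 3 (3 ≤ ·)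
  have card_three := card_filter_update_add hmem f 3 (· = 3)
  have card_two := card_filter_update_add hmem f 3 (· = 2)
  simp only [hy, Nat.reduceLeDiff, ↓reduceIte, add_zero, Std.le_refl, Nat.reduceEqDiff,
    Nat.succ_ne_self] at card_ge_three card_three card_two
  have card_three_le : #((G.neighborFinset x).filter fun z => f z = 3) ≤
      #((G.neighborFinset x).filter fun z => 3 ≤ f z) :=
    card_le_card (monotone_filter_right _ fun _ _ hn => hn.ge)
  have other_two : 2 ≤ #((G.neighborFinset x).filter fun z => f z = 2) →
      ∃ z, G.Adj x z ∧ z ≠ y ∧ f z = 2 := by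
    intro hcard
    obtain ⟨z, hz, hzy⟩ := exists_mem_ne hcard y
    rw [mem_filter, SimpleGraph.mem_neighborFinset] at hz
    exact ⟨z, hz.1, hzy, hz.2⟩
  unfold Is4RDFAt at h ⊢
  grind [Function.update_self, Function.update_of_ne]

theorem exists_adj_two_le_of_eq_two (h : Is4RDFAt G f x) (hx : f x = 2) :
    ∃ y, G.Adj x y ∧ 2 ≤ f y := by
  rcases h.2.2.1 hx with ⟨y, hy, h3⟩ | hcard
  · exact ⟨y, hy, by omega⟩
  · obtain ⟨y, hy⟩ := card_pos.1 (by omega : 0 < #((G.neighborFinset x).filter fun y => f y = 2))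
    rw [mem_filter, SimpleGraph.mem_neighborFinset] at hy
    exact ⟨y, hy.1, hy.2.ge⟩

theorem of_eq_zero {u w : V} (hx : f x = 0) (huw : u ≠ w) (hu : G.Adj x u) (hw : G.Adj x w)
    (hfu : 3 ≤ f u) (hfw : 3 ≤ f w) : Is4RDFAt G f x := by
  refine ⟨fun _ => Or.inr (Or.inr (Or.inl ?_)), by omega, by omega, by omega⟩
  exact one_lt_card.2 ⟨u, mem_filter.2 ⟨(G.mem_neighborFinset x u).2 hu, hfu⟩,
    w, mem_filter.2 ⟨(G.mem_neighborFinset x w).2 hw, hfw⟩, huw⟩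

theorem of_eq_three (hx : f x = 3) (hy : G.Adj x y) (hfy : 2 ≤ f y) : Is4RDFAt G f x :=
  ⟨by omega, by omega, by omega, fun _ => ⟨y, hy, hfy⟩⟩

end Is4RDFAt

/-- If `f` is a 4RDF, `f v = 1`, and `v` has distinct neighbors `u, w`
with `f u = 3` and `f w = 2`, then `g` with `g v = 0`, `g w = 3`, and `g = f`
elsewhere (so `g u = 3`) is a 4RDF of the same weight. -/
theorem swap_one_three_two_to_zero_three_three_is_4RDF {V : Type*} [Fintype V]
    [DecidableEq V] (G : SimpleGraph V) [DecidableRel G.Adj] (f : V → ℕ)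
    (hf : Is4RDF G f) (v u w : V) (huw : u ≠ w) (hvu : G.Adj v u) (hvw : G.Adj v w)
    (hv : f v = 1) (hu : f u = 3) (hw : f w = 2) :
    Is4RDF G (Function.update (Function.update f v 0) w 3) ∧
      ∑ x, Function.update (Function.update f v 0) w 3 x = ∑ x, f x := by
  have hvw' : v ≠ w := G.ne_of_adj hvw
  have hf₀w : Function.update f v 0 w = 2 := by rw [Function.update_of_ne hvw'.symm, hw]
  have hfx : ∀ x, Is4RDFAt G f x := hf.2
  refine ⟨is4RDF_iff.2 ⟨fun x => ?_, fun x => ?_⟩, ?_⟩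
  · simp only [Function.update_apply]
    split_ifs <;> first | omega | exact hf.1 x
  · by_cases hxv : x = v
    · subst hxv
      exact .of_eq_zero (by simp [hvw']) huw hvu hvw (by simp [hvu.ne', huw, hu]) (by simp)
    by_cases hxw : x = w
    · subst hxw
      obtain ⟨y, hy, hfy⟩ := (hfx x).exists_adj_two_le_of_eq_two hw
      have hyv : y ≠ v := by rintro rfl; omega
      exact .of_eq_three (by simp) hy (by simpa [hyv, hy.ne'] using hfy)
    exact ((hfx x).update_of_le_one hxv hv.le zero_le_one).update_two_to_three hxw hf₀w
  · have hsum₀ := sum_update_add_s9 (mem_univ v) f 0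
    have hsum := sum_update_add_s9 (mem_univ w) (Function.update f v 0) 3
    omega
end
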